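/- arXiv:1309.0760 — 8 statements merged into one kernel-verified Lean document; each statement's English description precedes it below -/
import Mathlib

section
/- Let q ≥ 6 be an even integer, μ = 2·cot(π/q), α = (μ/2)·(3μ²−4)/(5μ²+4) and γ = (μ/2)·(5μ²+4)/(3μ²−4). Then the quantity 2·log( μ·(γ−α) / ((μ/2−α)·(γ−μ/2)) ) equals 2·log(8·cos²(π/q)). -/
set_option maxHeartbeats 1000000

open Real

/-- The area of the planar natural extension domain of the multiplicative Veech
map: `2·log(μ(γ−α)/((μ/2−α)(γ−μ/2))) = 2·log(8cos²(π/q))`. -/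
theorem veech_area_formula
    (q n : ℕ) (hq : q = 2 * n) (hq6 : 6 ≤ q)
    (μ α γ : ℝ) (hμ : μ = 2 * Real.cos (π / q) / Real.sin (π / q))
    (hα : α = (μ / 2) * (3 * μ ^ 2 - 4) / (5 * μ ^ 2 + 4))
    (hγ : γ = (μ / 2) * (5 * μ ^ 2 + 4) / (3 * μ ^ 2 - 4)) :
    2 * Real.log (μ * (γ - α) / ((μ / 2 - α) * (γ - μ / 2)))
      = 2 * Real.log (8 * Real.cos (π / q) ^ 2) := by
  have hq' : (6 : ℝ) ≤ (q : ℝ) := by exact_mod_cast hq6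
  have hqpos : (0 : ℝ) < (q : ℝ) := by linarith
  have hx1 : 0 < π / q := div_pos Real.pi_pos hqpos
  have hx2 : π / q ≤ π / 6 := by
    apply div_le_div_of_nonneg_left Real.pi_pos.le (by norm_num) hq'
  have hxpi : π / q < π := by
    have := Real.pi_pos
    linarith
  have hs : 0 < Real.sin (π / q) := Real.sin_pos_of_pos_of_lt_pi hx1 hxpi
  have hc : Real.sqrt 3 / 2 ≤ Real.cos (π / q) := by
    rw [← Real.cos_pi_div_six]
    exact Real.cos_le_cos_of_nonneg_of_le_pi hx1.le (by linarith [Real.pi_pos]) hx2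
  have hc12 : 1 / 2 < Real.cos (π / q) := by
    nlinarith [Real.sq_sqrt (by norm_num : (0:ℝ) ≤ 3), Real.sqrt_nonneg 3]
  set c := Real.cos (π / q) with hcdef
  set s := Real.sin (π / q) with hsdef
  have hpyth : s ^ 2 + c ^ 2 = 1 := Real.sin_sq_add_cos_sq _
  have hmu : μ * s = 2 * c := by
    rw [hμ]; field_simp
  have hμpos : 0 < μ := by
    rw [hμ]; positivity
  have hμsq : 4 / 3 < μ ^ 2 := by
    nlinarith [hmu, hpyth, hs, hc12]
  have hApos : 0 < 3 * μ ^ 2 - 4 := by nlinarith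
  have hBpos : 0 < 5 * μ ^ 2 + 4 := by nlinarith
  have hA : 3 * μ ^ 2 - 4 ≠ 0 := ne_of_gt hApos
  have hB : 5 * μ ^ 2 + 4 ≠ 0 := ne_of_gt hBpos
  have e1 : μ / 2 - α = μ * (μ ^ 2 + 4) / (5 * μ ^ 2 + 4) := by
    rw [hα]; field_simp; ring
  have e2 : γ - μ / 2 = μ * (μ ^ 2 + 4) / (3 * μ ^ 2 - 4) := by
    rw [hγ]; rw [div_sub' hA, div_left_inj' hA]; ring
  have e3 : γ - α = 8 * μ ^ 3 * (μ ^ 2 + 4) / ((3 * μ ^ 2 - 4) * (5 * μ ^ 2 + 4)) := by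
    rw [hα, hγ]; field_simp; ring
  have hmusq : μ ^ 2 = c ^ 2 * (μ ^ 2 + 4) := by nlinarith [hmu, hpyth]
  have h4 : (0:ℝ) < μ ^ 2 + 4 := by positivity
  have key1 : μ * (γ - α) / ((μ / 2 - α) * (γ - μ / 2)) = 8 * μ ^ 2 / (μ ^ 2 + 4) := by
    rw [e1, e2, e3]
    field_simp
    exact div_self (by linarith)
  have key : μ * (γ - α) / ((μ / 2 - α) * (γ - μ / 2)) = 8 * c ^ 2 := by
    rw [key1, div_eq_iff h4.ne']
    linear_combination 8 * hmusq
  rw [key]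
end

section
/- Let q ≥ 6 be an even integer, μ = 2·cot(π/q), α = (μ/2)·(3μ²−4)/(5μ²+4) and γ = (μ/2)·(5μ²+4)/(3μ²−4). Then ∫₀^α (1/(x+μ/2) − 1/(x−μ/2)) dx + ∫_α^{μ/2} (1/(x+μ/2) − 1/(x−γ)) dx = log(8·cos²(π/q)). -/
open Real intervalIntegral

lemma my_integrable (a b c : ℝ) (h : c ∉ Set.uIcc a b) :
    IntervalIntegrable (fun x => 1 / (x - c)) MeasureTheory.volume a b := by
  apply ContinuousOn.intervalIntegrable
  apply continuousOn_const.div (continuousOn_id.sub continuousOn_const)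
  intro x hx
  exact sub_ne_zero.2 (fun he => h ((show x = c from he) ▸ hx))

lemma my_integral (a b c : ℝ) (h : c ∉ Set.uIcc a b) :
    ∫ x in a..b, 1 / (x - c) = Real.log ((b - c) / (a - c)) := by
  have h0 : (0:ℝ) ∉ Set.uIcc (a - c) (b - c) := by
    intro h0
    apply h
    rcases Set.mem_uIcc.1 h0 with ⟨h1, h2⟩ | ⟨h1, h2⟩
    · exact Set.mem_uIcc.2 (Or.inl ⟨by linarith, by linarith⟩)
    · exact Set.mem_uIcc.2 (Or.inr ⟨by linarith, by linarith⟩)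
  rw [integral_comp_sub_right (fun x => 1 / x) c, integral_one_div h0]

set_option maxHeartbeats 1000000 in
/-- The integral computing the area of the Veech natural extension domain:
`∫₀^α (1/(x+μ/2) − 1/(x−μ/2)) dx + ∫_α^{μ/2} (1/(x+μ/2) − 1/(x−γ)) dx
  = log(8cos²(π/q))`. -/
theorem veech_area_integral
    (q n : ℕ) (hq : q = 2 * n) (hq6 : 6 ≤ q)
    (μ α γ : ℝ) (hμ : μ = 2 * Real.cos (π / q) / Real.sin (π / q))
    (hα : α = (μ / 2) * (3 * μ ^ 2 - 4) / (5 * μ ^ 2 + 4))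
    (hγ : γ = (μ / 2) * (5 * μ ^ 2 + 4) / (3 * μ ^ 2 - 4)) :
    (∫ x in (0 : ℝ)..α, (1 / (x + μ / 2) - 1 / (x - μ / 2))) +
      (∫ x in α..(μ / 2), (1 / (x + μ / 2) - 1 / (x - γ))) =
      Real.log (8 * Real.cos (π / q) ^ 2) := by
  have hq0 : (6:ℝ) ≤ (q:ℝ) := by exact_mod_cast hq6
  set t := π / q with ht
  have htpos : 0 < t := by
    rw [ht]; exact div_pos pi_pos (by linarith)
  have htle : t ≤ π / 6 := by
    rw [ht]; exact div_le_div_of_nonneg_left pi_pos.le (by norm_num) hq0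
  have hs : 0 < Real.sin t := sin_pos_of_pos_of_lt_pi htpos (by linarith [pi_pos])
  have hc : 0 < Real.cos t := cos_pos_of_mem_Ioo ⟨by linarith [pi_pos], by linarith [pi_pos]⟩
  have hsc : Real.sin t < Real.cos t := by
    have h1 : Real.sin t ≤ 1 / 2 := by
      rw [← Real.sin_pi_div_six]
      exact Real.strictMonoOn_sin.monotoneOn ⟨by linarith [pi_pos], by linarith [pi_pos]⟩
        ⟨by linarith [pi_pos], by linarith [pi_pos]⟩ htle
    have h2 : Real.cos (π / 6) ≤ Real.cos t :=
      Real.cos_le_cos_of_nonneg_of_le_pi htpos.le (by linarith [pi_pos]) htle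
    have h3 : (1:ℝ) < Real.sqrt 3 := by
      nlinarith [Real.sq_sqrt (by norm_num : (0:ℝ) ≤ 3), Real.sqrt_nonneg 3]
    rw [Real.cos_pi_div_six] at h2
    linarith
  have hμ2 : 2 < μ := by
    rw [hμ, lt_div_iff₀ hs]; linarith
  have hA : 0 < 3 * μ ^ 2 - 4 := by nlinarith
  have hB : 0 < 5 * μ ^ 2 + 4 := by nlinarith
  subst hα hγ
  set α := (μ / 2) * (3 * μ ^ 2 - 4) / (5 * μ ^ 2 + 4) with hα
  set γ := (μ / 2) * (5 * μ ^ 2 + 4) / (3 * μ ^ 2 - 4) with hγ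
  have h0α : 0 < α := div_pos (mul_pos (by linarith) hA) hB
  have hαm : α < μ / 2 := by rw [hα, div_lt_iff₀ hB]; nlinarith
  have hmγ : μ / 2 < γ := by rw [hγ, lt_div_iff₀ hA]; nlinarith
  -- memberships
  have mem1 : -(μ/2) ∉ Set.uIcc (0:ℝ) α := by
    intro hx; rcases Set.mem_uIcc.1 hx with ⟨h1, h2⟩ | ⟨h1, h2⟩ <;> linarith
  have mem2 : (μ/2) ∉ Set.uIcc (0:ℝ) α := by
    intro hx; rcases Set.mem_uIcc.1 hx with ⟨h1, h2⟩ | ⟨h1, h2⟩ <;> linarith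
  have mem3 : -(μ/2) ∉ Set.uIcc α (μ/2) := by
    intro hx; rcases Set.mem_uIcc.1 hx with ⟨h1, h2⟩ | ⟨h1, h2⟩ <;> linarith
  have mem4 : γ ∉ Set.uIcc α (μ/2) := by
    intro hx; rcases Set.mem_uIcc.1 hx with ⟨h1, h2⟩ | ⟨h1, h2⟩ <;> linarith
  have e₁ : (∫ x in (0:ℝ)..α, (1 / (x + μ / 2) - 1 / (x - μ / 2))) =
      Real.log ((α + μ/2) / (μ/2)) - Real.log ((μ/2 - α) / (μ/2)) := by
    have : (∫ x in (0:ℝ)..α, (1 / (x + μ / 2) - 1 / (x - μ / 2))) =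
        (∫ x in (0:ℝ)..α, 1 / (x - -(μ/2))) - ∫ x in (0:ℝ)..α, 1 / (x - μ/2) := by
      rw [← intervalIntegral.integral_sub (my_integrable _ _ _ mem1) (my_integrable _ _ _ mem2)]
      congr 1; funext x; ring_nf
    rw [this, my_integral _ _ _ mem1, my_integral _ _ _ mem2,
      show α - -(μ/2) = α + μ/2 by ring, show (0:ℝ) - -(μ/2) = μ/2 by ring,
      show α - μ/2 = -(μ/2 - α) by ring, show (0:ℝ) - μ/2 = -(μ/2) by ring, neg_div_neg_eq]
  have e₂ : (∫ x in α..(μ/2), (1 / (x + μ / 2) - 1 / (x - γ))) =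
      Real.log (μ / (α + μ/2)) - Real.log ((γ - μ/2) / (γ - α)) := by
    have : (∫ x in α..(μ/2), (1 / (x + μ / 2) - 1 / (x - γ))) =
        (∫ x in α..(μ/2), 1 / (x - -(μ/2))) - ∫ x in α..(μ/2), 1 / (x - γ) := by
      rw [← intervalIntegral.integral_sub (my_integrable _ _ _ mem3) (my_integrable _ _ _ mem4)]
      congr 1; funext x; ring_nf
    rw [this, my_integral _ _ _ mem3, my_integral _ _ _ mem4,
      show μ/2 - -(μ/2) = μ by ring, show α - -(μ/2) = α + μ/2 by ring,
      show μ/2 - γ = -(γ - μ/2) by ring, show α - γ = -(γ - α) by ring, neg_div_neg_eq]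
  rw [e₁, e₂]
  -- the algebraic identity
  have hμsq : (μ ^ 2 + 4) * Real.sin t ^ 2 = 4 := by
    rw [hμ]; field_simp; linear_combination 4 * Real.sin_sq_add_cos_sq t
  have hμc : μ ^ 2 * Real.sin t ^ 2 = 4 * Real.cos t ^ 2 := by
    rw [hμ]; field_simp; ring
  have hμ4 : (0:ℝ) < μ ^ 2 + 4 := by positivity
  have h8 : 8 * Real.cos t ^ 2 * (μ ^ 2 + 4) = 8 * μ ^ 2 := by
    have hs2 : (0:ℝ) < Real.sin t ^ 2 := by positivity
    have key : (8 * Real.cos t ^ 2 * (μ ^ 2 + 4) - 8 * μ ^ 2) * Real.sin t ^ 2 = 0 := by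
      linear_combination 8 * Real.cos t ^ 2 * hμsq - 8 * hμc
    rcases mul_eq_zero.1 key with h | h
    · linarith
    · linarith
  have hD : 0 < (μ/2 - α) * (γ - μ/2) := mul_pos (by linarith) (by linarith)
  have hid : μ * (γ - α) * (μ ^ 2 + 4) = 8 * μ ^ 2 * ((μ/2 - α) * (γ - μ/2)) := by
    rw [hα, hγ, div_sub_div _ _ hA.ne' hB.ne', sub_div' hB.ne', div_sub' hA.ne', div_mul_div_comm,
      mul_div_assoc', div_mul_eq_mul_div, mul_div_assoc',
      div_eq_div_iff (mul_ne_zero hA.ne' hB.ne') (mul_ne_zero hB.ne' hA.ne')]; ring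
  have h9 : (8 * Real.cos t ^ 2 * ((μ/2 - α) * (γ - μ/2))) * (μ ^ 2 + 4) =
      (μ * (γ - α)) * (μ ^ 2 + 4) := by
    linear_combination ((μ/2 - α) * (γ - μ/2)) * h8 - hid
  have harg : 8 * Real.cos t ^ 2 = μ * (γ - α) / ((μ/2 - α) * (γ - μ/2)) := by
    rw [eq_div_iff hD.ne']
    exact mul_right_cancel₀ hμ4.ne' h9
  rw [harg]
  have p1 : (0:ℝ) < α + μ/2 := by linarith
  have p2 : (0:ℝ) < μ/2 := by linarith
  have p3 : (0:ℝ) < μ/2 - α := by linarith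
  have pμ : (0:ℝ) < μ := by linarith
  have p5 : (0:ℝ) < γ - μ/2 := by linarith
  have p6 : (0:ℝ) < γ - α := by linarith
  have p7 : (0:ℝ) < μ * (γ - α) := mul_pos pμ p6
  rw [Real.log_div p1.ne' p2.ne', Real.log_div p3.ne' p2.ne', Real.log_div pμ.ne' p1.ne',
    Real.log_div p5.ne' p6.ne', Real.log_div p7.ne' hD.ne', Real.log_mul pμ.ne' p6.ne',
    Real.log_mul p3.ne' p5.ne']
  ring
end

section
/- Let q ≥ 8 be an even integer, λ = 2·cos(π/q), and define φ_j = (S⁻¹T)ʲ·(−λ/2) where S = [[1,λ],[0,1]] and T = [[0,−1],[1,0]]. Then φ_j = −cos((j+1)π/q)/cos(jπ/q) for 0 ≤ j < q/2, and in particular φ_{q/2−1} = 0. -/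
open Real

/-- The orbit `φ_j = (S⁻¹T)ʲ·(−λ/2)` satisfies
`φ_j = −cos((j+1)π/q)/cos(jπ/q)` for `0 ≤ j < q/2`, and `φ_{q/2−1} = 0`. -/
theorem phi_orbit_formula
    (q n : ℕ) (hq : q = 2 * n) (hq8 : 8 ≤ q)
    (lam : ℝ) (hlam : lam = 2 * Real.cos (π / q))
    (φ : ℕ → ℝ) (hφ0 : φ 0 = -(lam / 2))
    (hφ : ∀ j, φ (j + 1) = -1 / φ j - lam) :
    (∀ j < n, φ j = -Real.cos (((j : ℝ) + 1) * π / q) / Real.cos ((j : ℝ) * π / q)) ∧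
    φ (n - 1) = 0 := by
  have hn4 : 4 ≤ n := by omega
  have hqn : (q:ℝ) = 2 * n := by exact_mod_cast congrArg Nat.cast hq
  have hqpos : (0:ℝ) < (q:ℝ) := by
    have : (8:ℝ) ≤ q := by exact_mod_cast hq8
    linarith
  have hpi := Real.pi_pos
  have hcos : ∀ j : ℕ, j < n → 0 < Real.cos ((j:ℝ) * π / q) := by
    intro j hj
    apply Real.cos_pos_of_mem_Ioo
    constructor
    · have : (0:ℝ) ≤ (j:ℝ) * π / q := by positivity
      linarith
    · rw [div_lt_div_iff₀ hqpos two_pos]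
      have hjn : (j:ℝ) < n := by exact_mod_cast hj
      nlinarith
  have key : ∀ j, j < n → φ j = -Real.cos (((j:ℝ)+1) * π / q) / Real.cos ((j:ℝ) * π / q) := by
    intro j
    induction j with
    | zero =>
      intro _
      simp [hφ0, hlam]
    | succ j ih =>
      intro hj
      have hj' : j < n := Nat.lt_of_succ_lt hj
      have hcj : 0 < Real.cos ((j:ℝ) * π / q) := hcos j hj'
      have hcj1 : 0 < Real.cos (((j:ℝ)+1) * π / q) := by
        have := hcos (j+1) hj
        push_cast at this
        exact this
      have h2 : Real.cos (((j:ℝ)+2) * π / q) + Real.cos ((j:ℝ)*π/q)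
          = 2 * Real.cos (π/q) * Real.cos (((j:ℝ)+1)*π/q) := by
        rw [show ((j:ℝ)+2)*π/q = ((j:ℝ)+1)*π/q + π/q by ring,
            show (j:ℝ)*π/q = ((j:ℝ)+1)*π/q - π/q by ring,
            Real.cos_add, Real.cos_sub]
        ring
      rw [hφ, ih hj', hlam]
      push_cast
      rw [show ((j:ℝ)+1+1) = (j:ℝ)+2 by ring]
      field_simp
      nlinarith [h2, hcj.ne', hcj1.ne', sq_nonneg (Real.cos (((j:ℝ)+1)*π/q)),
        congrArg Real.cos (show π * ((j:ℝ)+2) / q = ((j:ℝ)+2)*π/q by ring)]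
  refine ⟨key, ?_⟩
  have hn1 : n - 1 < n := by omega
  rw [key (n-1) hn1]
  have hc : ((n-1:ℕ):ℝ) = (n:ℝ) - 1 := by
    have : (1:ℕ) ≤ n := by omega
    push_cast [Nat.cast_sub this]
    ring
  rw [hc, show ((n:ℝ)-1+1) = (n:ℝ) by ring]
  have : (n:ℝ) * π / q = π / 2 := by
    rw [hqn]
    have hn0 : (n:ℝ) ≠ 0 := by positivity
    field_simp
  rw [this, Real.cos_pi_div_two]
  simp
end

section
/- Let q ≥ 8 be an even integer and n = q/2. With λ = 2·cos(π/q), S·x = x+λ, T·x = −1/x, the finite sequence φ_j = −cos((j+1)π/q)/cos(jπ/q) is strictly increasing in j for 0 ≤ j ≤ n−1, with φ_0 = −λ/2, φ_{n−2} = −1/λ, and φ_{n−1} = 0. -/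
open Real

/-- The sequence `φ_j = −cos((j+1)π/q)/cos(jπ/q)` is strictly increasing for
`0 ≤ j ≤ n−1`, with `φ_0 = −λ/2`, `φ_{n−2} = −1/λ`, `φ_{n−1} = 0`. -/
theorem phi_strict_mono
    (q n : ℕ) (hq : q = 2 * n) (hq8 : 8 ≤ q)
    (lam : ℝ) (hlam : lam = 2 * Real.cos (π / q))
    (φ : ℕ → ℝ)
    (hφ : ∀ j, φ j = -Real.cos (((j : ℝ) + 1) * π / q) / Real.cos ((j : ℝ) * π / q)) :
    (∀ j, j + 1 ≤ n - 1 → φ j < φ (j + 1)) ∧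
    φ 0 = -(lam / 2) ∧ φ (n - 2) = -1 / lam ∧ φ (n - 1) = 0 := by
  have hn4 : 4 ≤ n := by omega
  have hq0 : (0:ℝ) < q := by
    have : (8:ℝ) ≤ q := by exact_mod_cast hq8
    linarith
  have hqn : (q:ℝ) = 2 * n := by exact_mod_cast hq
  have hn0 : (n:ℝ) ≠ 0 := by
    have : (4:ℝ) ≤ n := by exact_mod_cast hn4
    linarith
  have ht : 0 < π / q := by positivity
  have htpi : π / q < π := by
    rw [div_lt_iff₀ hq0]
    have h1q : (1:ℝ) < q := by
      have : (8:ℝ) ≤ q := by exact_mod_cast hq8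
      linarith
    nlinarith [Real.pi_pos, mul_lt_mul_of_pos_left h1q Real.pi_pos]
  have hsin : 0 < Real.sin (π / q) := Real.sin_pos_of_pos_of_lt_pi ht htpi
  have hcos : ∀ j : ℕ, j < n → 0 < Real.cos ((j:ℝ) * π / q) := by
    intro j hj
    apply Real.cos_pos_of_mem_Ioo
    have hjq : (2 * (j:ℝ)) < q := by
      exact_mod_cast (by omega : 2 * j < q)
    constructor
    · have : 0 ≤ (j:ℝ) * π / q := by positivity
      nlinarith [Real.pi_pos]
    · rw [div_lt_div_iff₀ hq0 (by norm_num : (0:ℝ) < 2)]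
      nlinarith [Real.pi_pos]
  constructor
  · intro j hj
    have hc0 := hcos j (by omega)
    have hc1 := hcos (j+1) (by omega)
    push_cast at hc1
    rw [hφ j, hφ (j+1)]
    push_cast
    rw [div_lt_div_iff₀ hc0 hc1]
    have key : Real.cos ((j:ℝ) * π / q) * Real.cos (((j:ℝ) + 1 + 1) * π / q)
        = Real.cos (((j:ℝ) + 1) * π / q) ^ 2 - Real.sin (π / q) ^ 2 := by
      have h1 : (j:ℝ) * π / q = ((j:ℝ) + 1) * π / q - π / q := by ring
      have h2 : ((j:ℝ) + 1 + 1) * π / q = ((j:ℝ) + 1) * π / q + π / q := by ring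
      rw [h1, h2, Real.cos_sub, Real.cos_add]
      nlinarith [Real.sin_sq_add_cos_sq (((j:ℝ) + 1) * π / q),
        Real.sin_sq_add_cos_sq (π / q)]
    nlinarith [key, mul_pos hsin hsin]
  refine ⟨?_, ?_, ?_⟩
  · rw [hφ 0, hlam]
    norm_num
  · have hc1 : Real.cos (π / q) ≠ 0 := by
      have := hcos 1 (by omega)
      push_cast at this
      rw [one_mul] at this
      exact ne_of_gt this
    have e1 : (((n - 2 : ℕ) : ℝ) + 1) * π / q = π / 2 - π / q := by
      have : ((n - 2 : ℕ) : ℝ) = (n : ℝ) - 2 := by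
        push_cast [Nat.cast_sub (by omega : 2 ≤ n)]
        ring
      rw [this, hqn]
      field_simp
      ring
    have e2 : ((n - 2 : ℕ) : ℝ) * π / q = π / 2 - 2 * (π / q) := by
      have : ((n - 2 : ℕ) : ℝ) = (n : ℝ) - 2 := by
        push_cast [Nat.cast_sub (by omega : 2 ≤ n)]
        ring
      rw [this, hqn]
      field_simp
    rw [hφ (n-2), e1, e2, Real.cos_pi_div_two_sub, Real.cos_pi_div_two_sub,
      Real.sin_two_mul, hlam]
    field_simp
  · have e1 : (((n - 1 : ℕ) : ℝ) + 1) * π / q = π / 2 := by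
      have : ((n - 1 : ℕ) : ℝ) = (n : ℝ) - 1 := by
        push_cast [Nat.cast_sub (by omega : 1 ≤ n)]
        ring
      rw [this, hqn]
      field_simp
      ring
    rw [hφ (n-1), e1, Real.cos_pi_div_two]
    simp
end

section
/- Let q ≥ 8 be an even integer, λ = 2·cos(π/q), and define δ_0 = −λ−1 and δ_{j+1} = −λ − 1/δ_j. Let Q = (1/√(sin(π/q)))·[[1, cos(π/q)],[0, sin(π/q)]] and U the rotation matrix of angle π/q. Then for all j ≥ 0 with the sequence defined (0 ≤ j ≤ q/2 − 2): Q·δ_j = −(Uʲ·(Q·1)), where · denotes the Möbius action. -/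
open Real

/-- For the sequence `δ_0 = −λ−1`, `δ_{j+1} = −λ − 1/δ_j`, one has
`Q·δ_j = −(Uʲ·(Q·1))` for `0 ≤ j ≤ q/2 − 2`, where `Q·x = (x+cos(π/q))/sin(π/q)`
and `Uʲ` is the rotation by `jπ/q` acting by Möbius transformations. -/
theorem Q_delta_formula
    (q n : ℕ) (hq : q = 2 * n) (hq8 : 8 ≤ q)
    (lam : ℝ) (hlam : lam = 2 * Real.cos (π / q))
    (δ : ℕ → ℝ) (hδ0 : δ 0 = -lam - 1)
    (hδ : ∀ j, δ (j + 1) = -lam - 1 / δ j) :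
    ∀ j ≤ n - 2,
      (δ j + Real.cos (π / q)) / Real.sin (π / q) =
        -((Real.cos ((j : ℝ) * π / q) *
              ((1 + Real.cos (π / q)) / Real.sin (π / q)) -
            Real.sin ((j : ℝ) * π / q)) /
          (Real.sin ((j : ℝ) * π / q) *
              ((1 + Real.cos (π / q)) / Real.sin (π / q)) +
            Real.cos ((j : ℝ) * π / q))) := by
  have hn : 4 ≤ n := by omega
  set θ : ℝ := π / q with hθ
  have hπ : (0:ℝ) < π := Real.pi_pos
  have hq0 : (0:ℝ) < q := by positivity
  have hqR : (q:ℝ) = 2 * n := by rw [hq]; push_cast; ring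
  have hθpos : 0 < θ := by positivity
  have hθsmall : θ ≤ π / 8 := by
    rw [hθ, div_le_div_iff₀ hq0 (by norm_num)]
    have : (8:ℝ) ≤ q := by exact_mod_cast hq8
    nlinarith
  have hnθ : (n : ℝ) * θ = π / 2 := by
    rw [hθ, hqR]
    have hn0 : (n:ℝ) ≠ 0 := by positivity
    field_simp
  -- positivity of the relevant sines
  have hs : ∀ j : ℕ, j ≤ n - 1 → 0 < Real.sin ((j : ℝ) * θ + θ / 2) := by
    intro j hj
    apply Real.sin_pos_of_pos_of_lt_pi
    · positivity
    · have hjn : (j : ℝ) ≤ (n : ℝ) - 1 := by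
        have : (j:ℕ) + 1 ≤ n := by omega
        have := Nat.cast_le (α := ℝ) |>.mpr this
        push_cast at this; linarith
      have : (j : ℝ) * θ + θ / 2 ≤ ((n:ℝ) - 1) * θ + θ / 2 := by nlinarith
      nlinarith
  have hsθ : 0 < Real.sin θ := by
    apply Real.sin_pos_of_pos_of_lt_pi hθpos
    linarith
  have hch : 0 < Real.cos (θ / 2) := by
    apply Real.cos_pos_of_mem_Ioo
    constructor
    · linarith
    · linarith
  have hlamθ : lam = 2 * Real.cos θ := hlam
  -- double angle facts
  have hsin2 : Real.sin θ = 2 * Real.sin (θ/2) * Real.cos (θ/2) := by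
    rw [← Real.sin_two_mul]; ring_nf
  have hcos2 : Real.cos θ = 2 * Real.cos (θ/2) ^ 2 - 1 := by
    rw [← Real.cos_two_mul]; ring_nf
  -- key induction
  have key : ∀ j : ℕ, j ≤ n - 2 →
      δ j * Real.sin ((j : ℝ) * θ + θ / 2) = -Real.sin (((j : ℝ) + 1) * θ + θ / 2) := by
    intro j
    induction j with
    | zero =>
      intro _
      rw [hδ0, hlamθ]
      push_cast
      have h3 : ((0:ℝ) + 1) * θ + θ / 2 = θ + (θ / 2) := by ring
      have h0 : (0:ℝ) * θ + θ / 2 = θ / 2 := by ring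
      rw [h3, h0, Real.sin_add, hsin2, hcos2]
      ring
    | succ j ih =>
      intro hj
      have hj' : j ≤ n - 2 := by omega
      have IH := ih hj'
      set x : ℝ := (j : ℝ) * θ + θ / 2 with hxdef
      have hsx : 0 < Real.sin x := hs j (by omega)
      have e1 : ((j : ℝ) + 1) * θ + θ / 2 = x + θ := by rw [hxdef]; ring
      have hsx1 : 0 < Real.sin (x + θ) := by
        rw [← e1]
        have := hs (j + 1) (by omega)
        push_cast at this
        exact this
      rw [e1] at IH
      have hδj : δ j ≠ 0 := by
        intro h0
        rw [h0, zero_mul] at IH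
        linarith
      rw [hδ j, hlamθ]
      push_cast
      have e2 : ((j : ℝ) + 1 + 1) * θ + θ / 2 = (x + θ) + θ := by rw [hxdef]; ring
      rw [e1, e2, Real.sin_add (x + θ) θ]
      have hsinx : Real.sin x = Real.sin (x + θ) * Real.cos θ - Real.cos (x + θ) * Real.sin θ := by
        have := Real.sin_sub (x + θ) θ
        simpa using this
      rw [hsinx] at IH
      field_simp
      linear_combination -IH
  intro j hj
  have hu : (j : ℝ) * π / q = (j : ℝ) * θ := by rw [hθ]; ring
  rw [hu]
  have hx := key j hj
  set x : ℝ := (j : ℝ) * θ + θ / 2 with hxdef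
  have hsx : 0 < Real.sin x := hs j (by omega)
  have e1 : ((j : ℝ) + 1) * θ + θ / 2 = x + θ := by rw [hxdef]; ring
  rw [e1] at hx
  -- LHS = -cos x / sin x
  have hLHS : (δ j + Real.cos θ) / Real.sin θ = -Real.cos x / Real.sin x := by
    rw [div_eq_div_iff hsθ.ne' hsx.ne']
    have hadd := Real.sin_add x θ
    linear_combination hx - hadd
  rw [hLHS]
  -- RHS = -cos x / sin x
  have hk : (2 : ℝ) * Real.cos (θ / 2) / Real.sin θ ≠ 0 := by positivity
  have hN : Real.cos ((j : ℝ) * θ) * ((1 + Real.cos θ) / Real.sin θ) - Real.sin ((j : ℝ) * θ)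
      = (2 * Real.cos (θ / 2) / Real.sin θ) * Real.cos x := by
    rw [hxdef, Real.cos_add ((j : ℝ) * θ) (θ/2)]
    field_simp
    rw [hsin2, hcos2]
    ring
  have hD : Real.sin ((j : ℝ) * θ) * ((1 + Real.cos θ) / Real.sin θ) + Real.cos ((j : ℝ) * θ)
      = (2 * Real.cos (θ / 2) / Real.sin θ) * Real.sin x := by
    rw [hxdef, Real.sin_add ((j : ℝ) * θ) (θ/2)]
    field_simp
    rw [hsin2, hcos2]
    ring
  rw [hN, hD, mul_div_mul_left _ _ hk, neg_div]
end

section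
/- Let q ≥ 8 be an even integer and Q·x = (x + cos(π/q))/sin(π/q). With S·x = x + 2cos(π/q) and T·x = −1/x, define φ_j = (S⁻¹T)ʲ·(−cos(π/q)). Then Q·φ_j = tan(jπ/q) for all 0 ≤ j ≤ q/2 − 1. -/
open Real

/-- With `φ_j = (S⁻¹T)ʲ·(−cos(π/q))`, one has `Q·φ_j = tan(jπ/q)` for
`0 ≤ j ≤ q/2 − 1`, where `Q·x = (x+cos(π/q))/sin(π/q)`. -/
theorem Q_phi_tan
    (q n : ℕ) (hq : q = 2 * n) (hq8 : 8 ≤ q)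
    (lam : ℝ) (hlam : lam = 2 * Real.cos (π / q))
    (φ : ℕ → ℝ) (hφ0 : φ 0 = -Real.cos (π / q))
    (hφ : ∀ j, φ (j + 1) = -1 / φ j - lam) :
    ∀ j ≤ n - 1,
      (φ j + Real.cos (π / q)) / Real.sin (π / q) = Real.tan ((j : ℝ) * π / q) := by
  have hn : 4 ≤ n := by omega
  have hqR : (8:ℝ) ≤ q := by exact_mod_cast hq8
  have hqpos : (0:ℝ) < q := by linarith
  have hcos : ∀ j : ℕ, j ≤ n - 1 → 0 < Real.cos ((j:ℝ) * π / q) := by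
    intro j hj
    apply Real.cos_pos_of_mem_Ioo
    constructor
    · have : (0:ℝ) ≤ (j:ℝ) * π / q := by positivity
      linarith [Real.pi_pos]
    · rw [div_lt_iff₀ hqpos]
      have hjq : (2:ℝ) * j < q := by
        have : 2 * j < q := by omega
        exact_mod_cast this
      nlinarith [Real.pi_pos]
  have hsin : 0 < Real.sin (π / q) := by
    apply Real.sin_pos_of_pos_of_lt_pi
    · positivity
    · rw [div_lt_iff₀ hqpos]; nlinarith [Real.pi_pos]
  have key : ∀ j ≤ n - 1,
      φ j = -Real.cos (((j:ℝ)+1) * π / q) / Real.cos ((j:ℝ) * π / q) := by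
    intro j hj
    induction j with
    | zero => simp [hφ0]
    | succ k ih =>
      have hk1 : k + 1 ≤ n - 1 := hj
      have hk : k ≤ n - 1 := by omega
      have ihk := ih hk
      have hck : 0 < Real.cos ((k:ℝ) * π / q) := hcos k hk
      have hck1 : 0 < Real.cos (((k:ℝ)+1) * π / q) := by
        have := hcos (k+1) hk1
        push_cast at this
        convert this using 3 <;> ring
      have hφk : φ k ≠ 0 := by
        rw [ihk]
        exact ne_of_lt (div_neg_of_neg_of_pos (by linarith) hck)
      have hsum : Real.cos ((k:ℝ) * π / q) + Real.cos (((k:ℝ)+2) * π / q)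
          = 2 * Real.cos (((k:ℝ)+1) * π / q) * Real.cos (π / q) := by
        have h1 : ((k:ℝ)) * π / q = ((k:ℝ)+1) * π / q - π / q := by ring
        have h2 : ((k:ℝ)+2) * π / q = ((k:ℝ)+1) * π / q + π / q := by ring
        rw [h1, h2, Real.cos_sub, Real.cos_add]; ring
      rw [hφ k, ihk, hlam]
      push_cast
      rw [show ((k:ℝ)+1+1) * π / q = ((k:ℝ)+2) * π / q from by ring]
      field_simp
      nlinarith [hsum, hck.le, hck1.le, show Real.cos (π * ((k:ℝ)+2) / q) = Real.cos (((k:ℝ)+2) * π / q) by congr 1; ring]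
  intro j hj
  rw [key j hj, Real.tan_eq_sin_div_cos]
  have hck : 0 < Real.cos ((j:ℝ) * π / q) := hcos j hj
  have hexp : Real.cos (((j:ℝ)+1) * π / q)
      = Real.cos ((j:ℝ) * π / q) * Real.cos (π / q)
        - Real.sin ((j:ℝ) * π / q) * Real.sin (π / q) := by
    have h2 : ((j:ℝ)+1) * π / q = (j:ℝ) * π / q + π / q := by ring
    rw [h2, Real.cos_add]
  rw [hexp]
  field_simp
  ring
end

section
/- Let q ≥ 8 be divisible by 4, μ = 2·cot(π/q), and let M = P·R^{q/4} where P·x = x+μ and R^{q/4}·x = −1/x, so M·x = μ − 1/x. Let c = (μ+√(μ²+4))/2 (= cot(π/(2q))). Then M·(−c) = c, the fixed points of M are (μ±√(μ²−4))/2, c exceeds the larger fixed point, and the sequence x_j := Mʲ·c is strictly decreasing in j ≥ 0 and bounded below by (μ+√(μ²−4))/2. -/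
open Real

set_option maxHeartbeats 1000000 in
/-- For `q ≥ 8` divisible by 4 and the Möbius map `M·x = μ − 1/x`: `M·(−c) = c`
with `c = (μ+√(μ²+4))/2`; the fixed points of `M` are `(μ±√(μ²−4))/2`; `c` exceeds
the larger fixed point; and the orbit `x_j = Mʲ·c` is strictly decreasing and
bounded below by `(μ+√(μ²−4))/2`. -/
theorem parabolic_like_orbit
    (q : ℕ) (hq4 : 4 ∣ q) (hq8 : 8 ≤ q)
    (μ c : ℝ) (hμ : μ = 2 * Real.cos (π / q) / Real.sin (π / q))
    (hc : c = (μ + Real.sqrt (μ ^ 2 + 4)) / 2)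
    (x : ℕ → ℝ) (hx0 : x 0 = c) (hx : ∀ j, x (j + 1) = μ - 1 / x j) :
    μ - 1 / (-c) = c ∧
    (μ - 1 / ((μ + Real.sqrt (μ ^ 2 - 4)) / 2) = (μ + Real.sqrt (μ ^ 2 - 4)) / 2) ∧
    (μ - 1 / ((μ - Real.sqrt (μ ^ 2 - 4)) / 2) = (μ - Real.sqrt (μ ^ 2 - 4)) / 2) ∧
    (μ + Real.sqrt (μ ^ 2 - 4)) / 2 < c ∧
    (∀ j, x (j + 1) < x j) ∧
    (∀ j, (μ + Real.sqrt (μ ^ 2 - 4)) / 2 < x j) := by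
  have hqR : (8 : ℝ) ≤ (q : ℝ) := by exact_mod_cast hq8
  have hqpos : (0 : ℝ) < q := by linarith
  have hθpos : 0 < π / q := div_pos Real.pi_pos hqpos
  have hθlt : π / q < π / 4 :=
    div_lt_div_of_pos_left Real.pi_pos (by norm_num) (by linarith)
  have hθle : π / q ≤ π / 2 := by linarith [Real.pi_pos]
  have hsin : 0 < Real.sin (π / q) :=
    Real.sin_pos_of_pos_of_lt_pi hθpos (by linarith [Real.pi_pos])
  have hcs : Real.sin (π / q) < Real.cos (π / q) := by
    have h1 : Real.sin (π / q) < Real.sin (π / 4) := by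
      apply Real.sin_lt_sin_of_lt_of_le_pi_div_two (by linarith) (by linarith [Real.pi_pos]) hθlt
    have h2 : Real.cos (π / 4) ≤ Real.cos (π / q) := by
      apply Real.cos_le_cos_of_nonneg_of_le_pi hθpos.le (by linarith [Real.pi_pos]) hθlt.le
    rw [Real.sin_pi_div_four] at h1
    rw [Real.cos_pi_div_four] at h2
    linarith
  have hμ2 : 2 < μ := by
    rw [hμ, lt_div_iff₀ hsin]; linarith
  set s := Real.sqrt (μ ^ 2 - 4) with hs
  set t := Real.sqrt (μ ^ 2 + 4) with ht
  have hssq : s ^ 2 = μ ^ 2 - 4 := Real.sq_sqrt (by nlinarith)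
  have htsq : t ^ 2 = μ ^ 2 + 4 := Real.sq_sqrt (by nlinarith)
  have hsnn : 0 ≤ s := Real.sqrt_nonneg _
  have htnn : 0 ≤ t := Real.sqrt_nonneg _
  have hslt : s < μ := by nlinarith
  have htgt : μ < t := by nlinarith
  have hst : s < t := by nlinarith
  have hcpos : 0 < c := by rw [hc]; nlinarith
  have hc2 : c ^ 2 = μ * c + 1 := by rw [hc]; nlinarith
  set f : ℝ := (μ + s) / 2 with hf
  set g : ℝ := (μ - s) / 2 with hg
  have hfsq : f ^ 2 = μ * f - 1 := by rw [hf]; nlinarith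
  have hgsq : g ^ 2 = μ * g - 1 := by rw [hg]; nlinarith
  have hfpos : 1 < f := by rw [hf]; nlinarith
  have hgpos : 0 < g := by rw [hg]; nlinarith
  have hfc : f < c := by rw [hf, hc]; linarith
  have hμc : μ < c := by rw [hc]; linarith
  have hfg : f * g = 1 := by rw [hf, hg]; nlinarith [hssq]
  have hfgsum : f + g = μ := by rw [hf, hg]; ring
  have key : ∀ j, f < x j ∧ x (j + 1) < x j := by
    intro j
    induction j with
    | zero =>
      refine ⟨by rw [hx0]; exact hfc, ?_⟩
      rw [hx 0, hx0]
      have h1 : 0 < 1 / c := one_div_pos.2 hcpos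
      linarith
    | succ n ih =>
      obtain ⟨hfn, hdec⟩ := ih
      have hxpos : 0 < x n := lt_trans (by linarith) hfn
      have hfx1 : f < x (n + 1) := by
        rw [hx n]
        have h1 : 1 / x n < 1 / f := one_div_lt_one_div_of_lt (by linarith) hfn
        have hfne : f ≠ 0 := by positivity
        have hff : μ - 1 / f = f := by
          field_simp
          linarith [hfsq]
        linarith
      refine ⟨hfx1, ?_⟩
      rw [hx (n + 1)]
      have hy : 0 < x (n + 1) := by linarith
      have hgx : g < x (n + 1) := by
        have : g ≤ f := by rw [hf, hg]; linarith
        linarith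
      have hinv : x (n + 1) * (1 / x (n + 1)) = 1 := mul_one_div_cancel (ne_of_gt hy)
      nlinarith [mul_pos (sub_pos.2 hfx1) (sub_pos.2 hgx), hinv, hy]
  have hcne : c ≠ 0 := ne_of_gt hcpos
  have hfne : f ≠ 0 := by positivity
  have hgne : g ≠ 0 := ne_of_gt hgpos
  refine ⟨?_, ?_, ?_, hfc, fun j => (key j).2, fun j => (key j).1⟩
  · rw [div_neg, sub_neg_eq_add]
    field_simp
    nlinarith [hc2]
  · field_simp
    linarith [hfsq]
  · field_simp
    linarith [hgsq]
end

section
/- Let q ≥ 8 be an even integer, μ = 2·cot(π/q), α = (μ/2)·(3μ²−4)/(5μ²+4), γ = (μ/2)·(5μ²+4)/(3μ²−4), and c = (1+cos(π/q))/sin(π/q) (= μ/2 + 1/sin(π/q)). Then c > γ, i.e. μ/2 + √(μ²+4)/2 > μ/2 + μ(μ²+4)/(3μ²−4), for all even q ≥ 8. -/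
open Real

/-- For even `q ≥ 8`, with `μ = 2·cot(π/q)`, `γ = (μ/2)(5μ²+4)/(3μ²−4)` and
`c = (1+cos(π/q))/sin(π/q)`, one has `c > γ`. -/
theorem c_gt_gamma
    (q : ℕ) (hq : Even q) (hq8 : 8 ≤ q)
    (μ γ c : ℝ) (hμ : μ = 2 * Real.cos (π / q) / Real.sin (π / q))
    (hγ : γ = (μ / 2) * (5 * μ ^ 2 + 4) / (3 * μ ^ 2 - 4))
    (hc : c = (1 + Real.cos (π / q)) / Real.sin (π / q)) :
    c > γ := by
  have hq0 : (0:ℝ) < q := by positivity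
  have hx0 : 0 < π / q := by positivity
  have hx8 : π / q ≤ π / 8 := by
    apply div_le_div_of_nonneg_left pi_pos.le (by norm_num)
    exact_mod_cast hq8
  have hxpi : π / q < π := lt_of_le_of_lt hx8 (by have := pi_pos; linarith)
  have hs : 0 < Real.sin (π / q) := Real.sin_pos_of_pos_of_lt_pi hx0 hxpi
  have hcle : Real.cos (π / 8) ≤ Real.cos (π / q) :=
    Real.cos_le_cos_of_nonneg_of_le_pi hx0.le (by have := pi_pos; linarith) hx8
  -- numeric bound: cos (π/8) = √(2+√2)/2 > 0.92
  have h2 : Real.sqrt 2 > 1.41 := by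
    nlinarith [Real.sq_sqrt (by norm_num : (2:ℝ) ≥ 0), Real.sqrt_nonneg 2]
  have hb : Real.sqrt (2 + Real.sqrt 2) > 1.84 := by
    nlinarith [Real.sq_sqrt (by positivity : (0:ℝ) ≤ 2 + Real.sqrt 2),
      Real.sqrt_nonneg (2 + Real.sqrt 2)]
  have hco : Real.cos (π / q) > 0.92 := by
    rw [Real.cos_pi_div_eight] at hcle; linarith
  set s := Real.sin (π / q) with hsdef
  set co := Real.cos (π / q) with hcodef
  have hpy : s ^ 2 + co ^ 2 = 1 := Real.sin_sq_add_cos_sq _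
  have hkey : 4 * co ^ 2 - 2 * co - 1 > 0 := by nlinarith
  have h3 : 3 * μ ^ 2 - 4 > 0 := by
    rw [hμ, div_pow, gt_iff_lt, sub_pos, mul_div_assoc', lt_div_iff₀ (by positivity)]
    nlinarith
  rw [hγ, hc, hμ, gt_iff_lt, div_lt_div_iff₀ (by rw [hμ] at h3; exact h3) hs]
  have hs2 : s ^ 2 = 1 - co ^ 2 := by linarith
  field_simp
  rw [hs2]
  nlinarith [hkey]
end
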